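/- arXiv:0808.0298 — 4 statements merged into one kernel-verified Lean document; each statement's English description precedes it below -/
import Mathlib

section
/- Let ν be a coalitional game on n players (n ≥ 1), and let ε₁ = min over imputations p of max_{S ⊆ I} (ν(S) − p(S)). Then for every ε ∈ ℝ, the ε-core of ν is nonempty if and only if ε ≥ ε₁. In particular the ε₁-core (the least core) is nonempty. -/
theorem IsLeast.exists_mem_le_iff {α β : Type*} [Preorder β] {f : α → β} {s : Set α} {a : β}
    (h : IsLeast (f '' s) a) (b : β) : (∃ x ∈ s, f x ≤ b) ↔ a ≤ b := by
  constructor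
  · rintro ⟨x, hx, hxb⟩
    exact (h.2 ⟨x, hx, rfl⟩).trans hxb
  · obtain ⟨x, hx, rfl⟩ := h.1
    exact fun hab => ⟨x, hx, hab⟩

theorem sup'_excess_le_iff {ι : Type*} [Fintype ι] (ν : Finset ι → ℝ) (p : ι → ℝ)
    (ε : ℝ) :
    Finset.univ.sup' Finset.univ_nonempty (fun S : Finset ι => ν S - ∑ i ∈ S, p i) ≤ ε ↔
      ∀ S : Finset ι, ν S - ε ≤ ∑ i ∈ S, p i := by
  simp only [Finset.sup'_le_iff, Finset.mem_univ, true_implies, sub_le_comm]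

theorem eps_core_nonempty_iff_le_general
    (n : ℕ) (ν : Finset (Fin n) → ℝ)
    (Imp : Set (Fin n → ℝ))
    (maxDef : (Fin n → ℝ) → ℝ)
    (hmaxDef : maxDef = fun p =>
      Finset.univ.sup' Finset.univ_nonempty (fun S : Finset (Fin n) => ν S - ∑ i ∈ S, p i))
    (ε₁ : ℝ)
    (hmin : IsLeast (maxDef '' Imp) ε₁) :
    ∀ ε : ℝ,
      ({p ∈ Imp | ∀ S : Finset (Fin n), ν S - ε ≤ ∑ i ∈ S, p i}.Nonempty ↔ ε₁ ≤ ε) := by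
  intro ε
  rw [← hmin.exists_mem_le_iff, hmaxDef]
  simp only [sup'_excess_le_iff]
  rfl

/-- Let `ε₁` be the minimum, over all imputations `p`, of the maximum
deficit `max_{S ⊆ I} (ν S - p(S))`. Then for every `ε`, the `ε`-core is nonempty iff
`ε ≥ ε₁`. In particular the `ε₁`-core (the least core) is nonempty. -/
theorem eps_core_nonempty_iff_le
    (n : ℕ) (hn : 1 ≤ n) (ν : Finset (Fin n) → ℝ)
    (Imp : Set (Fin n → ℝ))
    (hImp : Imp = {p | (∀ i, 0 ≤ p i) ∧ ∑ i, p i = ν Finset.univ})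
    (maxDef : (Fin n → ℝ) → ℝ)
    (hmaxDef : maxDef = fun p =>
      Finset.univ.sup' Finset.univ_nonempty (fun S : Finset (Fin n) => ν S - ∑ i ∈ S, p i))
    (ε₁ : ℝ)
    (hmin : IsLeast (maxDef '' Imp) ε₁) :
    ∀ ε : ℝ,
      ({p ∈ Imp | ∀ S : Finset (Fin n), ν S - ε ≤ ∑ i ∈ S, p i}.Nonempty ↔ ε₁ ≤ ε) :=
  eps_core_nonempty_iff_le_general n ν Imp maxDef hmaxDef ε₁ hmin
end

section
/- Let ν be a coalitional game on n players. The set {ε ∈ ℝ : the ε-core of ν is nonempty} is a closed subset of ℝ. -/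
/-!
The conditions `ν S - ε ≤ p(S)` cut out a closed set of pairs `(ε, p)`, and the ε-values with
nonempty ε-core are its projection to `ε` over the imputations. Imputations form a compact set,
and projecting a closed set along a compact factor gives a closed set.
-/

open Finset

theorem isCompact_setOf_nonneg_sum_eq {ι : Type*} [Fintype ι] (c : ℝ) :
    IsCompact {p : ι → ℝ | (∀ i, 0 ≤ p i) ∧ ∑ i, p i = c} := by
  have hclosed : IsClosed {p : ι → ℝ | (∀ i, 0 ≤ p i) ∧ ∑ i, p i = c} := by
    simp only [Set.ofPred_and, Set.ofPred_forall]
    exact (isClosed_iInter fun i => isClosed_le continuous_const (continuous_apply i)).inter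
      (isClosed_eq (continuous_finsetSum _ fun i _ => continuous_apply i) continuous_const)
  refine (isCompact_Icc (a := 0) (b := fun _ => c)).of_isClosed_subset hclosed
    fun p ⟨hp, hsum⟩ => ⟨hp, fun i => ?_⟩
  calc p i ≤ ∑ j, p j := single_le_sum (fun j _ => hp j) (mem_univ i)
    _ = c := hsum

theorem IsCompact.isClosed_setOf_exists_mem {X Y : Type*} [TopologicalSpace X]
    [TopologicalSpace Y] {K : Set Y} (hK : IsCompact K) {C : Set (X × Y)} (hC : IsClosed C) :
    IsClosed {x | ∃ y ∈ K, (x, y) ∈ C} := by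
  have : CompactSpace K := isCompact_iff_compactSpace.mp hK
  have hfst : {x | ∃ y ∈ K, (x, y) ∈ C} = Prod.fst '' (Prod.map id ((↑) : K → Y) ⁻¹' C) := by
    ext x
    simp
  rw [hfst]
  exact isClosedMap_fst_of_compactSpace _
    (hC.preimage (continuous_id.prodMap continuous_subtype_val))

/-- For a coalitional game `ν`, the set of `ε ∈ ℝ` for which the
`ε`-core is nonempty is closed. -/
theorem eps_core_nonempty_set_isClosed
    (n : ℕ) (ν : Finset (Fin n) → ℝ) :
    IsClosed {ε : ℝ | ∃ p : Fin n → ℝ, (∀ i, 0 ≤ p i) ∧ (∑ i, p i = ν Finset.univ) ∧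
      ∀ S : Finset (Fin n), ν S - ε ≤ ∑ i ∈ S, p i} := by
  have hcore : IsClosed {q : ℝ × (Fin n → ℝ) | ∀ S, ν S - q.1 ≤ ∑ i ∈ S, q.2 i} := by
    simp only [Set.ofPred_forall]
    exact isClosed_iInter fun S => isClosed_le (by fun_prop) (by fun_prop)
  simpa only [Set.mem_ofPred_eq, and_assoc] using
    (isCompact_setOf_nonneg_sum_eq (ν univ)).isClosed_setOf_exists_mem hcore
end

section
/- Let ν be a simple game on n players. If the core of ν is nonempty, then ν has a veto player, i.e. there exists a player i ∈ I such that i ∈ S for every winning coalition S. -/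
open Finset

def IsInCore {ι : Type*} [Fintype ι] (ν : Finset ι → ℝ) (p : ι → ℝ) : Prop :=
  (∀ i, 0 ≤ p i) ∧ ∑ i, p i = ν univ ∧ ∀ S : Finset ι, ν S ≤ ∑ i ∈ S, p i

namespace IsInCore

variable {ι : Type*} [Fintype ι] {ν : Finset ι → ℝ} {p : ι → ℝ}

theorem exists_pos (hp : IsInCore ν p) (hgrand : 0 < ν univ) : ∃ i, 0 < p i := by
  obtain ⟨i, -, hi⟩ := exists_lt_of_sum_lt (s := univ) (f := 0) (g := p) <| by
    simpa [hp.2.1] using hgrand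
  exact ⟨i, hi⟩

/-- A coalition worth as much as the grand coalition receives the whole payoff, so every player
with a positive payoff belongs to it. -/
theorem mem_of_pos {S : Finset ι} (hp : IsInCore ν p) (hS : ν S = ν univ) {i : ι}
    (hi : 0 < p i) : i ∈ S := by
  classical
  by_contra hiS
  have hcover : ∑ j ∈ insert i S, p j ≤ ∑ j, p j :=
    sum_le_univ_sum_of_nonneg fun j => hp.1 j
  have hwin : ∑ j, p j ≤ ∑ j ∈ S, p j := hp.2.1 ▸ hS ▸ hp.2.2 S
  rw [sum_insert hiS] at hcover
  linarith

end IsInCore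

theorem veto_player_of_core_nonempty_general
    (n : ℕ) (ν : Finset (Fin n) → ℝ)
    (hgrand : ν Finset.univ = 1)
    (hcore : ∃ p : Fin n → ℝ, (∀ i, 0 ≤ p i) ∧ (∑ i, p i = ν Finset.univ) ∧
      ∀ S : Finset (Fin n), ν S ≤ ∑ i ∈ S, p i) :
    ∃ i : Fin n, ∀ S : Finset (Fin n), ν S = 1 → i ∈ S := by
  obtain ⟨p, hp⟩ : ∃ p, IsInCore ν p := hcore
  obtain ⟨i, hi⟩ := hp.exists_pos (by rw [hgrand]; exact one_pos)
  exact ⟨i, fun S hS => hp.mem_of_pos (hS.trans hgrand.symm) hi⟩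

/-- In a simple game `ν`, if the core is nonempty then there is a veto
player: a player `i` belonging to every winning coalition. -/
theorem veto_player_of_core_nonempty
    (n : ℕ) (ν : Finset (Fin n) → ℝ)
    (hsimple : ∀ S : Finset (Fin n), ν S = 0 ∨ ν S = 1)
    (hgrand : ν Finset.univ = 1)
    (hcore : ∃ p : Fin n → ℝ, (∀ i, 0 ≤ p i) ∧ (∑ i, p i = ν Finset.univ) ∧
      ∀ S : Finset (Fin n), ν S ≤ ∑ i ∈ S, p i) :
    ∃ i : Fin n, ∀ S : Finset (Fin n), ν S = 1 → i ∈ S :=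
  veto_player_of_core_nonempty_general n ν hgrand hcore
end

section
/- Let ν be a coalitional game on n players. If η and η′ are two imputations each of whose nonincreasingly sorted deficit vectors is lexicographically less than or equal to the nonincreasingly sorted deficit vector of every imputation, then η = η′; i.e. the nucleolus is unique. -/
/-!
If `η` and `η'` are both lexicographically minimal, their sorted deficit vectors coincide, so the
two families of deficits are rearrangements of one another. The deficits of the average
`(η + η') / 2` are the averages of the deficits, and averaging two rearrangements of a multiset
strictly lowers its nonincreasingly sorted list unless they agree termwise: peel off the largest
entry, noting that an average reaches the common maximum only when both of its terms do.
Minimality of `η` rules out the strict decrease, so all deficits agree, and the singleton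
coalitions give `η = η'`.
-/

/-- The deficits `ν S - p(S)` of all `2ⁿ` coalitions, sorted in nonincreasing order. -/
noncomputable def sortedDeficitVector (n : ℕ) (ν : Finset (Fin n) → ℝ)
    (p : Fin n → ℝ) : List ℝ :=
  Multiset.sort
    ((Finset.univ.val : Multiset (Finset (Fin n))).map (fun S => ν S - ∑ i ∈ S, p i)) (· ≥ ·)

/-- `l₁` is lexicographically less than or equal to `l₂`. -/
def LexLE (l₁ l₂ : List ℝ) : Prop := l₁ = l₂ ∨ List.Lex (· < ·) l₁ l₂

lemma not_lex_of_lexLE {l₁ l₂ : List ℝ} (h : LexLE l₁ l₂) : ¬ List.Lex (· < ·) l₂ l₁ := by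
  rcases h with rfl | h
  · exact fun h' => asymm h' h'
  · exact fun h' => asymm h h'

lemma LexLE.antisymm {l₁ l₂ : List ℝ} (h₁₂ : LexLE l₁ l₂) (h₂₁ : LexLE l₂ l₁) : l₁ = l₂ :=
  h₁₂.resolve_right (not_lex_of_lexLE h₂₁)

namespace Multiset

variable {ι α : Type*} [DecidableEq ι] [LinearOrder α]

lemma sort_ge_map_eq_cons_of_isMax {s : Multiset ι} (f : ι → α) {i : ι} (hi : i ∈ s)
    (hmax : ∀ j ∈ s, f j ≤ f i) :
    sort (s.map f) (· ≥ ·) = f i :: sort ((s.erase i).map f) (· ≥ ·) := by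
  conv_lhs => rw [← cons_erase hi, map_cons]
  refine sort_cons _ _ _ fun b hb => ?_
  obtain ⟨j, hj, rfl⟩ := mem_map.mp hb
  exact hmax j (mem_of_mem_erase hj)

theorem eqOn_or_lex_sort_ge_map_average (s : Multiset ι) (f g : ι → ℝ)
    (hfg : s.map f = s.map g) :
    (∀ i ∈ s, f i = g i) ∨
      List.Lex (· < ·) (sort (s.map fun i => (f i + g i) / 2) (· ≥ ·)) (sort (s.map f) (· ≥ ·)) := by
  induction s using strongInductionOn with
  | ih s ih =>
  rcases eq_or_ne s 0 with rfl | hs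
  · exact Or.inl fun i hi => absurd hi (notMem_zero i)
  obtain ⟨k, hk, hkmax⟩ := exists_max_image f hs
  obtain ⟨i, hi, himax⟩ := exists_max_image (fun i => (f i + g i) / 2) hs
  have hg_le : ∀ j ∈ s, g j ≤ f k := by
    intro j hj
    obtain ⟨j', hj', hfg'⟩ := mem_map.mp (hfg ▸ mem_map_of_mem g hj)
    exact hfg' ▸ hkmax j' hj'
  rw [sort_ge_map_eq_cons_of_isMax _ hi himax]
  rcases (show (f i + g i) / 2 ≤ f k by linarith [hkmax i hi, hg_le i hi]).lt_or_eq with hlt | heq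
  · rw [sort_ge_map_eq_cons_of_isMax _ hk hkmax]
    exact Or.inr (List.Lex.rel hlt)
  have hfi : f i = f k := by linarith [hkmax i hi, hg_le i hi]
  have hgi : g i = f k := by linarith [hkmax i hi, hg_le i hi]
  rw [sort_ge_map_eq_cons_of_isMax _ hi (fun j hj => hfi ▸ hkmax j hj), heq, hfi]
  have hfg' : (s.erase i).map f = (s.erase i).map g := by
    rw [← cons_inj_right (f i)]
    conv_rhs => rw [hfi, ← hgi]
    rw [← map_cons, ← map_cons, cons_erase hi, hfg]
  rcases ih _ (erase_lt.mpr hi) hfg' with hall | hlex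
  · refine Or.inl fun j hj => ?_
    rcases eq_or_ne j i with rfl | hji
    · rw [hfi, hgi]
    · exact hall j ((mem_erase_of_ne hji).mpr hj)
  · exact Or.inr (List.Lex.cons hlex)

end Multiset

lemma sortedDeficitVector_average (n : ℕ) (ν : Finset (Fin n) → ℝ) (η η' : Fin n → ℝ) :
    sortedDeficitVector n ν (fun i => (η i + η' i) / 2) =
      Multiset.sort (Finset.univ.val.map fun S =>
        ((ν S - ∑ i ∈ S, η i) + (ν S - ∑ i ∈ S, η' i)) / 2) (· ≥ ·) := by
  unfold sortedDeficitVector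
  congr 2
  funext S
  rw [← Finset.sum_div, Finset.sum_add_distrib]
  ring

/-- If `η` and `η'` are imputations whose nonincreasingly sorted deficit
vectors are both lexicographically ≤ that of every imputation, then `η = η'`:
the nucleolus is unique. -/
theorem nucleolus_unique
    (n : ℕ) (ν : Finset (Fin n) → ℝ)
    (η η' : Fin n → ℝ)
    (hηpos : ∀ i, 0 ≤ η i) (hηsum : ∑ i, η i = ν Finset.univ)
    (hη'pos : ∀ i, 0 ≤ η' i) (hη'sum : ∑ i, η' i = ν Finset.univ)
    (hlex : ∀ x : Fin n → ℝ, (∀ i, 0 ≤ x i) → (∑ i, x i = ν Finset.univ) →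
      LexLE (sortedDeficitVector n ν η) (sortedDeficitVector n ν x))
    (hlex' : ∀ x : Fin n → ℝ, (∀ i, 0 ≤ x i) → (∑ i, x i = ν Finset.univ) →
      LexLE (sortedDeficitVector n ν η') (sortedDeficitVector n ν x)) :
    η = η' := by
  have hsame : sortedDeficitVector n ν η = sortedDeficitVector n ν η' :=
    (hlex η' hη'pos hη'sum).antisymm (hlex' η hηpos hηsum)
  have hdeficits := congrArg ((↑) : List ℝ → Multiset ℝ) hsame
  simp only [sortedDeficitVector, Multiset.sort_eq] at hdeficits
  have hmid_pos : ∀ i, 0 ≤ (η i + η' i) / 2 := fun i => by linarith [hηpos i, hη'pos i]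
  have hmid_sum : ∑ i, (η i + η' i) / 2 = ν Finset.univ := by
    rw [← Finset.sum_div, Finset.sum_add_distrib, hηsum, hη'sum, add_self_div_two]
  rcases Multiset.eqOn_or_lex_sort_ge_map_average _ _ _ hdeficits with hall | hlt
  · funext i
    simpa using hall {i} (Finset.mem_univ_val _)
  · rw [← sortedDeficitVector_average] at hlt
    exact absurd hlt (not_lex_of_lexLE (hlex _ hmid_pos hmid_sum))
end
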